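/- arXiv:1001.0448 — 4 statements merged into one kernel-verified Lean document; each statement's English description precedes it below -/
import Mathlib

section
/- Let P be a polytope in the tropical projective space ℝT P^n with corresponding submodule M = φ⁻¹(P) ∪ {−∞} ⊆ ℝT^{n+1}. If M is a straight reflexive ℝT-module, then P is the tropically convex hull of at most n+1 points. -/
/-! # Tropical semifields and tropical modules -/

/-- A tropical semifield: a commutative semiring with idempotent addition
(`⊕` is `+`, `⊙` is `*`, the zero element `−∞` is `0`, the unity is `1`)
in which every nonzero element has a multiplicative inverse. -/
class TropSemifield (k : Type*) extends CommSemiring k where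
  add_idem : ∀ a : k, a + a = a
  exists_inv : ∀ a : k, a ≠ 0 → ∃ b : k, a * b = 1

/-- A tropical semigroup: commutative idempotent monoid, written additively
(the zero element is `−∞`). -/
class TropSemigroup (M : Type*) extends AddCommMonoid M where
  add_idem : ∀ v : M, v + v = v

/-- A module over a tropical semifield. -/
class TropModule (k : Type*) (M : Type*) [TropSemifield k] [TropSemigroup M] extends
    SMul k M where
  mul_smul : ∀ (a b : k) (v : M), (a * b) • v = a • b • v
  one_smul : ∀ v : M, (1 : k) • v = v
  add_smul : ∀ (a b : k) (v : M), (a + b) • v = a • v + b • v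
  smul_add : ∀ (a : k) (v w : M), a • (v + w) = a • v + a • w
  zero_smul : ∀ v : M, (0 : k) • v = 0
  smul_zero : ∀ a : k, a • (0 : M) = 0

/-- The canonical partial order `v ≤ w ↔ v ⊕ w = w`. -/
def tle {M : Type*} [Add M] (v w : M) : Prop := v + w = w

/-- Strict version of the canonical order. -/
def tlt {M : Type*} [Add M] (v w : M) : Prop := tle v w ∧ v ≠ w

/-- The canonical order of `k` is total. -/
def TotallyOrderedTSF (k : Type*) [TropSemifield k] : Prop :=
  ∀ a b : k, tle a b ∨ tle b a

/-- Every nonempty subset of `k` admits an infimum. -/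
def QuasiCompleteTSF (k : Type*) [TropSemifield k] : Prop :=
  ∀ S : Set k, S.Nonempty →
    ∃ c : k, (∀ x ∈ S, tle c x) ∧ ∀ d : k, (∀ x ∈ S, tle d x) → tle d c

/-- `k` is rational: `m`-th roots exist and `k` has no maximum element. -/
def RationalTSF (k : Type*) [TropSemifield k] : Prop :=
  (∀ (a : k) (m : ℕ), m ≠ 0 → ∃ b : k, b ^ m = a) ∧ ∀ a : k, ∃ b : k, tlt a b

instance (priority := 100) TropSemifield.toTropSemigroup (k : Type*) [TropSemifield k] :
    TropSemigroup k :=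
  { (inferInstance : AddCommMonoid k) with add_idem := TropSemifield.add_idem }

instance TropModule.self (k : Type*) [TropSemifield k] : TropModule k k :=
  { (inferInstance : SMul k k) with
    mul_smul := fun a b v => mul_assoc a b v
    one_smul := fun v => one_mul v
    add_smul := fun a b v => add_mul a b v
    smul_add := fun a v w => mul_add a v w
    zero_smul := fun v => zero_mul v
    smul_zero := fun a => mul_zero a }

instance TropSemigroup.pi {ι : Type*} (M : Type*) [TropSemigroup M] :
    TropSemigroup (ι → M) :=
  { Pi.addCommMonoid with add_idem := fun v => funext fun i => TropSemigroup.add_idem (v i) }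

instance TropModule.pi (k : Type*) {ι : Type*} (M : Type*) [TropSemifield k] [TropSemigroup M]
    [TropModule k M] : TropModule k (ι → M) where
  smul a v := fun i => a • v i
  mul_smul a b v := funext fun i => TropModule.mul_smul a b (v i)
  one_smul v := funext fun i => TropModule.one_smul (v i)
  add_smul a b v := funext fun i => TropModule.add_smul a b (v i)
  smul_add a v w := funext fun i => TropModule.smul_add a (v i) (w i)
  zero_smul v := funext fun i => TropModule.zero_smul (v i)
  smul_zero a := funext fun i => TropModule.smul_zero (a := a)

/-! ## Homomorphisms of tropical modules -/

/-- A homomorphism of `k`-modules. -/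
structure TropHom (k : Type*) (M : Type*) (N : Type*) [TropSemifield k] [TropSemigroup M]
    [TropModule k M] [TropSemigroup N] [TropModule k N] where
  toFun : M → N
  map_zero' : toFun 0 = 0
  map_add' : ∀ v w : M, toFun (v + w) = toFun v + toFun w
  map_smul' : ∀ (a : k) (v : M), toFun (a • v) = a • toFun v

namespace TropHom

variable {k M N : Type*} [TropSemifield k] [TropSemigroup M] [TropModule k M]
  [TropSemigroup N] [TropModule k N]

theorem ext' {f g : TropHom k M N} (h : ∀ v, f.toFun v = g.toFun v) : f = g := by
  cases f; cases g
  simp only [mk.injEq]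
  exact funext h

instance : Zero (TropHom k M N) :=
  ⟨⟨fun _ => 0, rfl, fun _ _ => (add_zero (0 : N)).symm,
    fun a _ => (TropModule.smul_zero (M := N) a).symm⟩⟩

instance : Add (TropHom k M N) :=
  ⟨fun f g =>
    { toFun := fun v => f.toFun v + g.toFun v
      map_zero' := by
        show f.toFun 0 + g.toFun 0 = 0
        rw [f.map_zero', g.map_zero', add_zero]
      map_add' := fun v w => by
        show f.toFun (v + w) + g.toFun (v + w) =
          (f.toFun v + g.toFun v) + (f.toFun w + g.toFun w)
        rw [f.map_add', g.map_add', add_add_add_comm]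
      map_smul' := fun a v => by
        show f.toFun (a • v) + g.toFun (a • v) = a • (f.toFun v + g.toFun v)
        rw [f.map_smul', g.map_smul', TropModule.smul_add] }⟩

instance : SMul k (TropHom k M N) :=
  ⟨fun a f =>
    { toFun := fun v => a • f.toFun v
      map_zero' := by
        show a • f.toFun 0 = 0
        rw [f.map_zero', TropModule.smul_zero]
      map_add' := fun v w => by
        show a • f.toFun (v + w) = a • f.toFun v + a • f.toFun w
        rw [f.map_add', TropModule.smul_add]
      map_smul' := fun b v => by
        show a • f.toFun (b • v) = b • (a • f.toFun v)
        rw [f.map_smul', ← TropModule.mul_smul, ← TropModule.mul_smul, mul_comm a b] }⟩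

instance : TropSemigroup (TropHom k M N) where
  add := (· + ·)
  zero := 0
  add_assoc f g h := ext' fun v => add_assoc (f.toFun v) (g.toFun v) (h.toFun v)
  zero_add f := ext' fun v => zero_add (f.toFun v)
  add_zero f := ext' fun v => add_zero (f.toFun v)
  add_comm f g := ext' fun v => add_comm (f.toFun v) (g.toFun v)
  nsmul := nsmulRec
  add_idem f := ext' fun v => TropSemigroup.add_idem (f.toFun v)

instance : TropModule k (TropHom k M N) where
  smul := (· • ·)
  mul_smul a b f := ext' fun v => TropModule.mul_smul a b (f.toFun v)
  one_smul f := ext' fun v => TropModule.one_smul (f.toFun v)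
  add_smul a b f := ext' fun v => TropModule.add_smul a b (f.toFun v)
  smul_add a f g := ext' fun v => TropModule.smul_add a (f.toFun v) (g.toFun v)
  zero_smul f := ext' fun v => TropModule.zero_smul (f.toFun v)
  smul_zero a := ext' fun v => TropModule.smul_zero (M := N) a

end TropHom

/-- The canonical map `M → (M∨)∨`, `v ↦ (ξ ↦ ⟨v, ξ⟩)`. -/
def iotaFun (k : Type*) (M : Type*) [TropSemifield k] [TropSemigroup M] [TropModule k M] :
    M → TropHom k (TropHom k M k) k :=
  fun v => ⟨fun ξ => ξ.toFun v, rfl, fun ξ η => rfl, fun a ξ => rfl⟩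

/-! ## Order-theoretic notions -/

/-- `z` is the infimum of `v` and `w` w.r.t. the canonical order. -/
def IsTInf {M : Type*} [Add M] (v w z : M) : Prop :=
  tle z v ∧ tle z w ∧ ∀ y : M, tle y v → tle y w → tle y z

/-- A tropical module is straight if it is a finitely distributive ordered lattice. -/
def Straight (M : Type*) [Add M] : Prop :=
  (∀ v w : M, ∃ z : M, IsTInf v w z) ∧
    ∀ v₁ v₂ w z₁ z₂ : M, IsTInf v₁ w z₁ → IsTInf v₂ w z₂ → IsTInf (v₁ + v₂) w (z₁ + z₂)

/-- Infimum of `v` and `w` within the subset `N`. -/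
def IsTInfOn {M : Type*} [Add M] (N : Set M) (v w z : M) : Prop :=
  tle z v ∧ tle z w ∧ ∀ y ∈ N, tle y v → tle y w → tle y z

/-- A submodule (viewed as a subset) is straight. -/
def StraightSet {M : Type*} [Add M] (N : Set M) : Prop :=
  (∀ v ∈ N, ∀ w ∈ N, ∃ z ∈ N, IsTInfOn N v w z) ∧
    ∀ v₁ ∈ N, ∀ v₂ ∈ N, ∀ w ∈ N, ∀ z₁ ∈ N, ∀ z₂ ∈ N,
      IsTInfOn N v₁ w z₁ → IsTInfOn N v₂ w z₂ → IsTInfOn N (v₁ + v₂) w (z₁ + z₂)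

/-! ## Generation, bases, extremal elements -/

/-- `S` generates the `k`-module `M`. -/
def TGenerates (k : Type*) {M : Type*} [TropSemifield k] [TropSemigroup M] [TropModule k M]
    (S : Set M) : Prop :=
  ∀ v : M, ∃ (r : ℕ) (a : Fin r → k) (x : Fin r → M), (∀ i, x i ∈ S) ∧ v = ∑ i, a i • x i

/-- `M` is finitely generated. -/
def TFG (k : Type*) (M : Type*) [TropSemifield k] [TropSemigroup M] [TropModule k M] : Prop :=
  ∃ S : Finset M, TGenerates k (↑S : Set M)

/-- A basis: a generating set no proper subset of which generates. -/
def TBasis (k : Type*) {M : Type*} [TropSemifield k] [TropSemigroup M] [TropModule k M]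
    (S : Set M) : Prop :=
  TGenerates k S ∧ ∀ T : Set M, T ⊂ S → ¬ TGenerates k T

/-- `S` generates the subset `N` (viewed as a submodule of `M`). -/
def TGeneratesOn (k : Type*) {M : Type*} [TropSemifield k] [TropSemigroup M] [TropModule k M]
    (N S : Set M) : Prop :=
  ∀ v ∈ N, ∃ (r : ℕ) (a : Fin r → k) (x : Fin r → M), (∀ i, x i ∈ S) ∧ v = ∑ i, a i • x i

/-- A basis of the submodule `N ⊆ M`. -/
def TBasisOn (k : Type*) {M : Type*} [TropSemifield k] [TropSemigroup M] [TropModule k M]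
    (N S : Set M) : Prop :=
  S ⊆ N ∧ TGeneratesOn k N S ∧ ∀ T : Set M, T ⊂ S → ¬ TGeneratesOn k N T

/-- An extremal element. -/
def TExtremal {M : Type*} [Add M] [Zero M] (e : M) : Prop :=
  e ≠ 0 ∧ ∀ v w : M, v + w = e → v = e ∨ w = e

/-- The ray `k ⊙ e` generated by an element. -/
def tray (k : Type*) {M : Type*} [TropSemifield k] [TropSemigroup M] [TropModule k M]
    (e : M) : Set M :=
  Set.range fun a : k => a • e

/-- The set of extremal rays of `M`. -/
def extRays (k : Type*) (M : Type*) [TropSemifield k] [TropSemigroup M] [TropModule k M] :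
    Set (Set M) :=
  {R : Set M | ∃ e : M, TExtremal e ∧ R = tray k e}

/-- The dimension of a straight reflexive module: the number of extremal rays. -/
noncomputable def tdim (k : Type*) (M : Type*) [TropSemifield k] [TropSemigroup M]
    [TropModule k M] : ℕ :=
  (extRays k M).ncard

/-! ## Further notions on homomorphisms -/

/-- A lightly surjective homomorphism. -/
def LightlySurjective {k M N : Type*} [TropSemifield k] [TropSemigroup M] [TropModule k M]
    [TropSemigroup N] [TropModule k N] (α : TropHom k M N) : Prop :=
  ∀ w : N, ∃ v : M, tle w (α.toFun v)

/-- A lattice-preserving homomorphism. -/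
def LatticePreserving {k M N : Type*} [TropSemifield k] [TropSemigroup M] [TropModule k M]
    [TropSemigroup N] [TropModule k N] (α : TropHom k M N) : Prop :=
  ∀ v w : M, ∀ x : N, tle x (α.toFun v) → tle x (α.toFun w) →
    ∃ y : M, tle y v ∧ tle y w ∧ tle x (α.toFun y)

/-- The inclusion of the subset `N` into the ambient module is lattice-preserving. -/
def LatPresSet {M : Type*} [Add M] (N : Set M) : Prop :=
  ∀ v ∈ N, ∀ w ∈ N, ∀ x : M, tle x v → tle x w → ∃ y ∈ N, tle y v ∧ tle y w ∧ tle x y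

/-- `η` is the dual element of `e`: `⟨e,η⟩ = 0` and
`⟨v,η⟩ ⊙ ⟨e,ξ⟩ ≤ ⟨v,ξ⟩` for all `v`, `ξ`. -/
def IsDualElement {k M : Type*} [TropSemifield k] [TropSemigroup M] [TropModule k M]
    (e : M) (η : TropHom k M k) : Prop :=
  η.toFun e = 1 ∧ ∀ (v : M) (ξ : TropHom k M k), tle (η.toFun v * ξ.toFun e) (ξ.toFun v)

/-! ## Locators -/

/-- A locator of `M`: a lower-saturated subsemigroup of `(M, ⊕)` that generates `M`. -/
structure IsLocator (k : Type*) {M : Type*} [TropSemifield k] [TropSemigroup M] [TropModule k M]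
    (S : Set M) : Prop where
  lower : ∀ v w : M, tle v w → w ∈ S → v ∈ S
  add_mem : ∀ v ∈ S, ∀ w ∈ S, v + w ∈ S
  generates : TGenerates k S

/-- The multiplicative inverse `⊘a` (junk value `−∞` at `−∞`). -/
noncomputable def tinv {k : Type*} [TropSemifield k] (a : k) : k := by
  classical exact if h : a = 0 then 0 else Classical.choose (TropSemifield.exists_inv a h)

/-- Scalar multiplication on locators: `a ⊙̌ S = (⊘a) ⊙ S` for `a ≠ −∞`, `(−∞) ⊙̌ S = M`. -/
noncomputable def locSMul {k M : Type*} [TropSemifield k] [TropSemigroup M] [TropModule k M]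
    (a : k) (S : Set M) : Set M := by
  classical exact if a = 0 then Set.univ else (fun v => tinv a • v) '' S

/-- `U` is the infimum of the locators `S`, `T` in `Loc(M)` (whose canonical
order is reverse inclusion, the sum being intersection). -/
def IsLocInf (k : Type*) {M : Type*} [TropSemifield k] [TropSemigroup M] [TropModule k M]
    (S T U : Set M) : Prop :=
  IsLocator k U ∧ S ⊆ U ∧ T ⊆ U ∧
    ∀ W : Set M, IsLocator k W → S ⊆ W → T ⊆ W → U ⊆ W

/-! ## Submodules -/

/-- A subset of a `k`-module which is a submodule. -/
structure IsTSubmodule (k : Type*) {M : Type*} [TropSemifield k] [TropSemigroup M]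
    [TropModule k M] (N : Set M) : Prop where
  zero_mem : (0 : M) ∈ N
  add_mem : ∀ v ∈ N, ∀ w ∈ N, v + w ∈ N
  smul_mem : ∀ (a : k), ∀ v ∈ N, a • v ∈ N

/-- A bundled submodule of a `k`-module. -/
structure TSub (k : Type*) (M : Type*) [TropSemifield k] [TropSemigroup M] [TropModule k M] where
  carrier : Set M
  zero_mem : (0 : M) ∈ carrier
  add_mem : ∀ v ∈ carrier, ∀ w ∈ carrier, v + w ∈ carrier
  smul_mem : ∀ (a : k), ∀ v ∈ carrier, a • v ∈ carrier

instance TSub.instZero {k M : Type*} [TropSemifield k] [TropSemigroup M] [TropModule k M]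
    (N : TSub k M) : Zero ↥N.carrier :=
  ⟨⟨0, N.zero_mem⟩⟩

instance TSub.instAdd {k M : Type*} [TropSemifield k] [TropSemigroup M] [TropModule k M]
    (N : TSub k M) : Add ↥N.carrier :=
  ⟨fun v w => ⟨v.1 + w.1, N.add_mem v.1 v.2 w.1 w.2⟩⟩

instance TSub.instSMul {k M : Type*} [TropSemifield k] [TropSemigroup M] [TropModule k M]
    (N : TSub k M) : SMul k ↥N.carrier :=
  ⟨fun a v => ⟨a • v.1, N.smul_mem a v.1 v.2⟩⟩

instance TSub.semigroup {k M : Type*} [TropSemifield k] [TropSemigroup M] [TropModule k M]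
    (N : TSub k M) : TropSemigroup ↥N.carrier where
  add := (· + ·)
  zero := 0
  add_assoc a b c := Subtype.ext (add_assoc a.1 b.1 c.1)
  zero_add a := Subtype.ext (zero_add a.1)
  add_zero a := Subtype.ext (add_zero a.1)
  add_comm a b := Subtype.ext (add_comm a.1 b.1)
  nsmul := nsmulRec
  add_idem a := Subtype.ext (TropSemigroup.add_idem a.1)

instance TSub.module {k M : Type*} [TropSemifield k] [TropSemigroup M] [TropModule k M]
    (N : TSub k M) : TropModule k ↥N.carrier where
  smul := (· • ·)
  mul_smul a b v := Subtype.ext (TropModule.mul_smul a b v.1)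
  one_smul v := Subtype.ext (TropModule.one_smul v.1)
  add_smul a b v := Subtype.ext (TropModule.add_smul a b v.1)
  smul_add a v w := Subtype.ext (TropModule.smul_add a v.1 w.1)
  zero_smul v := Subtype.ext (TropModule.zero_smul v.1)
  smul_zero a := Subtype.ext (TropModule.smul_zero (M := M) a)

/-! ## Linear combinations -/

theorem tsmul_sum {k M : Type*} [TropSemifield k] [TropSemigroup M] [TropModule k M]
    (a : k) {ι : Type*} (s : Finset ι) (f : ι → M) :
    a • (∑ i ∈ s, f i) = ∑ i ∈ s, a • f i := by
  classical
  induction s using Finset.induction_on with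
  | empty => simpa using TropModule.smul_zero (M := M) a
  | insert _ _ h ih => rw [Finset.sum_insert h, Finset.sum_insert h, TropModule.smul_add, ih]

/-- The homomorphism `kⁿ → M` sending the `i`-th standard basis element to `e i`. -/
def linComb {k M : Type*} [TropSemifield k] [TropSemigroup M] [TropModule k M] {n : ℕ}
    (e : Fin n → M) : TropHom k (Fin n → k) M where
  toFun v := ∑ i, v i • e i
  map_zero' :=
    (Finset.sum_congr rfl fun i _ => TropModule.zero_smul (e i)).trans Finset.sum_const_zero
  map_add' v w := by
    rw [← Finset.sum_add_distrib]
    exact Finset.sum_congr rfl fun i _ => TropModule.add_smul (v i) (w i) (e i)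
  map_smul' a v := by
    rw [tsmul_sum]
    exact Finset.sum_congr rfl fun i _ => TropModule.mul_smul a (v i) (e i)

/-- The homomorphism `M → kⁿ` induced by an `n`-tuple of elements of `M∨`. -/
def dualTuple {k M : Type*} [TropSemifield k] [TropSemigroup M] [TropModule k M] {n : ℕ}
    (η : Fin n → TropHom k M k) : TropHom k M (Fin n → k) where
  toFun v := fun i => (η i).toFun v
  map_zero' := funext fun i => (η i).map_zero'
  map_add' v w := funext fun i => (η i).map_add' v w
  map_smul' a v := funext fun i => (η i).map_smul' a v

/-! ## The tropical semifield of real numbers -/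

/-- The tropical semifield of real numbers `ℝT = ℝ ∪ {−∞}`,
with `⊕ = max`, `⊙ = +`, zero element `−∞` and unity `0`. -/
def RT : Type := WithBot ℝ

namespace RT

/-- Tropical addition `⊕` on `ℝT`: the maximum. -/
noncomputable def tadd (a b : RT) : RT := @max (WithBot ℝ) _ a b

/-- Tropical multiplication `⊙` on `ℝT`: ordinary addition. -/
def tmul (a b : RT) : RT := @HAdd.hAdd (WithBot ℝ) (WithBot ℝ) (WithBot ℝ) _ a b

/-- The zero element `−∞` of `ℝT`. -/
def tzero : RT := @Bot.bot (WithBot ℝ) _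

/-- The unity `0` of `ℝT`. -/
def tone : RT := ((0 : ℝ) : WithBot ℝ)

noncomputable def tnsmul : ℕ → RT → RT
  | 0, _ => tzero
  | n + 1, a => tadd (tnsmul n a) a

noncomputable def tnpow : ℕ → RT → RT
  | 0, _ => tone
  | n + 1, a => tmul (tnpow n a) a

noncomputable def tnatCast : ℕ → RT
  | 0 => tzero
  | n + 1 => tadd (tnatCast n) tone

theorem wb_zero_add (a : WithBot ℝ) : ((0 : ℝ) : WithBot ℝ) + a = a := by
  rw [WithBot.coe_zero, zero_add]

theorem wb_add_zero (a : WithBot ℝ) : a + ((0 : ℝ) : WithBot ℝ) = a := by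
  rw [WithBot.coe_zero, add_zero]

theorem wb_left_distrib (a b c : WithBot ℝ) : a + max b c = max (a + b) (a + c) := by
  have h : Monotone (fun x : WithBot ℝ => a + x) := fun x y hxy => add_le_add_right hxy _
  exact h.map_max

theorem wb_right_distrib (a b c : WithBot ℝ) : max a b + c = max (a + c) (b + c) := by
  have h : Monotone (fun x : WithBot ℝ => x + c) := fun x y hxy => add_le_add_left hxy _
  exact h.map_max

theorem wb_exists_inv (a : WithBot ℝ) (h : a ≠ ⊥) :
    ∃ b : WithBot ℝ, a + b = ((0 : ℝ) : WithBot ℝ) := by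
  obtain ⟨x, rfl⟩ := WithBot.ne_bot_iff_exists.mp h
  exact ⟨((-x : ℝ) : WithBot ℝ), by rw [← WithBot.coe_add, add_neg_cancel]⟩

noncomputable instance instTropSemifield : TropSemifield RT where
  add := tadd
  zero := tzero
  mul := tmul
  one := tone
  add_assoc a b c := @max_assoc (WithBot ℝ) _ a b c
  add_comm a b := @max_comm (WithBot ℝ) _ a b
  zero_add a := max_eq_right (@bot_le (WithBot ℝ) _ _ a)
  add_zero a := max_eq_left (@bot_le (WithBot ℝ) _ _ a)
  nsmul := tnsmul
  nsmul_zero a := rfl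
  nsmul_succ n a := rfl
  mul_assoc a b c := @add_assoc (WithBot ℝ) _ a b c
  mul_comm a b := @add_comm (WithBot ℝ) _ a b
  one_mul a := wb_zero_add a
  mul_one a := wb_add_zero a
  zero_mul a := @WithBot.bot_add ℝ _ a
  mul_zero a := @WithBot.add_bot ℝ _ a
  left_distrib := wb_left_distrib
  right_distrib := wb_right_distrib
  npow := tnpow
  npow_zero a := rfl
  npow_succ n a := rfl
  natCast := tnatCast
  natCast_zero := rfl
  natCast_succ n := rfl
  add_idem a := @max_self (WithBot ℝ) _ a
  exists_inv a h := wb_exists_inv a h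

end RT

/-- The canonical inclusion `ℝ → ℝT`. -/
def rc (x : ℝ) : RT := (x : WithBot ℝ)

theorem RT.rc_mul (x y : ℝ) : rc x * rc y = rc (x + y) := (WithBot.coe_add x y).symm

theorem RT.rc_zero : rc 0 = (1 : RT) := rfl

/-! ## Tropical projective space -/

theorem RT.cons_ne_zero {n : ℕ} (v : Fin n → ℝ) :
    (Fin.cons (rc 0) (fun i => rc (v i)) : Fin (n + 1) → RT) ≠ 0 := by
  intro h
  have h0 := congrFun h 0
  rw [Fin.cons_zero] at h0
  exact WithBot.coe_ne_bot h0

/-- Two nonzero vectors of `ℝT^{n+1}` are projectively equivalent if they differ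
by the scalar action of `ℝ`. -/
def projSetoid (n : ℕ) : Setoid {v : Fin (n + 1) → RT // v ≠ 0} where
  r v w := ∃ c : ℝ, w.1 = rc c • v.1
  iseqv := by
    constructor
    · intro v
      exact ⟨0, (TropModule.one_smul v.1).symm⟩
    · rintro v w ⟨c, hc⟩
      refine ⟨-c, ?_⟩
      rw [hc, ← TropModule.mul_smul, RT.rc_mul, neg_add_cancel, RT.rc_zero,
        TropModule.one_smul]
    · rintro u v w ⟨c, hc⟩ ⟨d, hd⟩
      refine ⟨d + c, ?_⟩
      rw [hd, hc, ← TropModule.mul_smul, RT.rc_mul]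

/-- The tropical projective space `ℝT P^n`. -/
def TP (n : ℕ) : Type := Quotient (projSetoid n)

/-- The canonical projection `φ : ℝT^{n+1} ∖ {−∞} → ℝT P^n`. -/
def tphi {n : ℕ} (v : Fin (n + 1) → RT) (h : v ≠ 0) : TP n :=
  Quotient.mk (projSetoid n) ⟨v, h⟩

/-- The subset `M = φ⁻¹(P) ∪ {−∞}` of `ℝT^{n+1}` corresponding to `P ⊆ ℝT P^n`. -/
def Mof {n : ℕ} (P : Set (TP n)) : Set (Fin (n + 1) → RT) :=
  {v | ∃ h : v ≠ 0, tphi v h ∈ P} ∪ {0}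

/-- A subset of `ℝT P^n` is tropically convex if the corresponding subset of
`ℝT^{n+1}` is a submodule. -/
def TropConvexP {n : ℕ} (Q : Set (TP n)) : Prop :=
  IsTSubmodule RT (Mof Q)

/-- The tropically convex hull. -/
def tchull {n : ℕ} (A : Set (TP n)) : Set (TP n) :=
  ⋂₀ {Q : Set (TP n) | TropConvexP Q ∧ A ⊆ Q}

/-- The embedding `ℝ^n → ℝT P^n`, `(a₁, …, aₙ) ↦ φ(0, a₁, …, aₙ)`. -/
def embR {n : ℕ} (v : Fin n → ℝ) : TP n :=
  tphi (Fin.cons (rc 0) fun i => rc (v i)) (RT.cons_ne_zero v)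

/-- A (tropical) polytope in `ℝT P^n`: the tropically convex hull of finitely
many points of `ℝ^n`. -/
def IsTropPolytope {n : ℕ} (P : Set (TP n)) : Prop :=
  ∃ S : Finset (TP n), (∀ x ∈ S, ∃ v : Fin n → ℝ, x = embR v) ∧ P = tchull ↑S

/-- A polytrope: a polytope that is convex as a subset of `ℝ^n` in the ordinary sense. -/
def IsPolytrope {n : ℕ} (P : Set (TP n)) : Prop :=
  IsTropPolytope P ∧ P ⊆ Set.range embR ∧ Convex ℝ (embR ⁻¹' P)

/-!
Write `M` as the span of finitely many real vectors and shrink the spanning set `R` to an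
irredundant one. Each `y ∈ R` is then extremal in `M`, and in a straight module extremal
elements are join-prime. For `x ∈ R` let `B x = min_l (x l - y l)`, the largest scalar with
`B x ⊙ y ≤ x`, and put `w = ⊕ₓ (-B x) ⊙ x ≥ y`. If `w > y` in every coordinate, then
`t ⊙ y ≤ w` for some `t > 0`, and join-primeness gives `t ⊙ y ≤ (-B x) ⊙ x` for some `x`,
against the maximality of `B x`. Hence some coordinate `j` has `w j = y j`, i.e. minimises
`x l - y l` for all `x ∈ R` at once. Two members of `R` sharing this coordinate would be
proportional, so `y ↦ j` is injective and `#R ≤ n + 1`.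
-/

section TropOrder

variable {M : Type*}

theorem tle_refl [TropSemigroup M] (v : M) : tle v v := TropSemigroup.add_idem v

theorem tle_antisymm [AddCommMagma M] {v w : M} (hvw : tle v w) (hwv : tle w v) : v = w :=
  hwv.symm.trans ((add_comm w v).trans hvw)

theorem tle_add_left [TropSemigroup M] (v w : M) : tle v (v + w) := by
  rw [tle, ← add_assoc, TropSemigroup.add_idem]

theorem tle_add_right [TropSemigroup M] (v w : M) : tle w (v + w) :=
  add_comm w v ▸ tle_add_left w v

theorem eq_zero_of_tle_zero [AddZeroClass M] {v : M} (h : tle v 0) : v = 0 :=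
  (add_zero v).symm.trans h

theorem tle_sum_of_mem [TropSemigroup M] {α : Type*} {s : Finset α} {f : α → M} {a : α}
    (ha : a ∈ s) : tle (f a) (∑ b ∈ s, f b) := by
  classical
  rw [← Finset.add_sum_erase s f ha]
  exact tle_add_left _ _

theorem Straight.tle_or_tle_of_tle_add [TropSemigroup M] (hs : Straight M) {g x y : M}
    (hg : TExtremal g) (h : tle g (x + y)) : tle g x ∨ tle g y := by
  obtain ⟨z₁, hz₁⟩ := hs.1 x g
  obtain ⟨z₂, hz₂⟩ := hs.1 y g
  have hz : IsTInf (x + y) g (z₁ + z₂) := hs.2 x y g z₁ z₂ hz₁ hz₂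
  have hzg : z₁ + z₂ = g := tle_antisymm hz.2.1 (hz.2.2 g h (tle_refl g))
  exact (hg.2 z₁ z₂ hzg).imp (fun h₁ : z₁ = g => h₁ ▸ hz₁.1)
    (fun h₂ : z₂ = g => h₂ ▸ hz₂.1)

end TropOrder

theorem TropSemifield.eq_one_of_mul_eq_self {k : Type*} [TropSemifield k] {a c : k}
    (ha : a ≠ 0) (h : c * a = a) : c = 1 := by
  obtain ⟨b, hab⟩ := TropSemifield.exists_inv a ha
  calc c = c * a * b := by rw [mul_assoc, hab, mul_one]
    _ = 1 := by rw [h, hab]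

namespace TotallyOrderedTSF

variable {k : Type*} [TropSemifield k]

theorem add_eq_or (hk : TotallyOrderedTSF k) (a b : k) : a + b = a ∨ a + b = b :=
  (hk a b).symm.imp (fun h => (add_comm a b).trans h) id

theorem eq_of_add_eq (hk : TotallyOrderedTSF k) {a b c : k} (h : a + b = c) (ha : a ≠ c) :
    b = c :=
  ((hk.add_eq_or a b).resolve_left fun h' => ha (h'.symm.trans h)).symm.trans h

end TotallyOrderedTSF

theorem TExtremal.smul {k M : Type*} [TropSemifield k] [TropSemigroup M] [TropModule k M]
    {g : M} (hg : TExtremal g) {a : k} (ha : a ≠ 0) : TExtremal (a • g) := by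
  obtain ⟨b, hab⟩ := TropSemifield.exists_inv a ha
  have hba : ∀ v : M, b • a • v = v := fun v => by
    rw [← TropModule.mul_smul, mul_comm, hab, TropModule.one_smul]
  have hab' : ∀ v : M, a • b • v = v := fun v => by
    rw [← TropModule.mul_smul, hab, TropModule.one_smul]
  refine ⟨fun h => hg.1 ?_, fun u v huv => ?_⟩
  · rw [← hba g, h, TropModule.smul_zero]
  · refine (hg.2 (b • u) (b • v) ?_).imp (fun h => ?_) (fun h => ?_)
    · rw [← TropModule.smul_add, huv, hba]
    · rw [← h, hab']
    · rw [← h, hab']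

section TSpan

variable {k M α : Type*} [TropSemifield k] [TropSemigroup M] [TropModule k M]

theorem IsTSubmodule.sum_mem {A : Set M} (hA : IsTSubmodule k A) {s : Finset α} {f : α → M}
    (hf : ∀ a ∈ s, f a ∈ A) : ∑ a ∈ s, f a ∈ A := by
  classical
  induction s using Finset.induction_on with
  | empty => exact hA.zero_mem
  | insert a s ha ih =>
    rw [Finset.sum_insert ha]
    exact hA.add_mem _ (hf a (Finset.mem_insert_self a s)) _
      (ih fun b hb => hf b (Finset.mem_insert_of_mem hb))

variable (k) in
def tspan (s : Finset α) (G : α → M) : Set M :=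
  {x | ∃ c : α → k, ∑ a ∈ s, c a • G a = x}

variable (k) in
def TIrredundant [DecidableEq α] (s : Finset α) (G : α → M) : Prop :=
  ∀ a ∈ s, G a ∉ tspan k (s.erase a) G

theorem isTSubmodule_tspan (s : Finset α) (G : α → M) : IsTSubmodule k (tspan k s G) where
  zero_mem := ⟨0, Finset.sum_eq_zero fun a _ => TropModule.zero_smul (G a)⟩
  add_mem := by
    rintro _ ⟨c, rfl⟩ _ ⟨d, rfl⟩
    refine ⟨c + d, ?_⟩
    simp only [Pi.add_apply, TropModule.add_smul, Finset.sum_add_distrib]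
  smul_mem := by
    rintro b _ ⟨c, rfl⟩
    refine ⟨fun a => b * c a, ?_⟩
    simp only [tsmul_sum, TropModule.mul_smul]

theorem mem_tspan {s : Finset α} {a : α} (ha : a ∈ s) (G : α → M) : G a ∈ tspan k s G := by
  classical
  refine ⟨Pi.single a 1, ?_⟩
  rw [Finset.sum_eq_single_of_mem a ha fun b _ hb => by
      rw [Pi.single_eq_of_ne hb, TropModule.zero_smul],
    Pi.single_eq_same, TropModule.one_smul]

theorem tspan_subset_iff {A : Set M} (hA : IsTSubmodule k A) {s : Finset α} {G : α → M} :
    tspan k s G ⊆ A ↔ ∀ a ∈ s, G a ∈ A := by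
  refine ⟨fun h a ha => h (mem_tspan ha G), ?_⟩
  rintro h _ ⟨c, rfl⟩
  exact hA.sum_mem fun a ha => hA.smul_mem _ _ (h a ha)

theorem tspan_erase_eq [DecidableEq α] {s : Finset α} {G : α → M} {a : α}
    (h : G a ∈ tspan k (s.erase a) G) : tspan k (s.erase a) G = tspan k s G := by
  refine subset_antisymm ((tspan_subset_iff (isTSubmodule_tspan s G)).2 fun b hb =>
    mem_tspan (Finset.mem_of_mem_erase hb) G) ((tspan_subset_iff (isTSubmodule_tspan _ G)).2
    fun b hb => ?_)
  rcases eq_or_ne b a with rfl | hne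
  · exact h
  · exact mem_tspan (Finset.mem_erase.2 ⟨hne, hb⟩) G

variable (k) in
theorem exists_subset_tIrredundant [DecidableEq α] (s : Finset α) (G : α → M) :
    ∃ t ⊆ s, TIrredundant k t G ∧ tspan k t G = tspan k s G := by
  induction s using Finset.strongInduction with
  | H s ih =>
    by_cases hs : TIrredundant k s G
    · exact ⟨s, subset_rfl, hs, rfl⟩
    · simp only [TIrredundant, not_forall, not_not] at hs
      obtain ⟨a, ha, hmem⟩ := hs
      obtain ⟨t, hts, ht, hspan⟩ := ih _ (Finset.erase_ssubset ha)
      exact ⟨t, hts.trans (Finset.erase_subset a s), ht, hspan.trans (tspan_erase_eq hmem)⟩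

theorem TIrredundant.eq_or_eq_of_add_eq {ι : Type*} [DecidableEq α] (hk : TotallyOrderedTSF k)
    {s : Finset α} {G : α → ι → k} (hs : TIrredundant k s G) {a : α} (ha : a ∈ s)
    (hGa : ∀ l, G a l ≠ 0) {u v : ι → k} (hu : u ∈ tspan k s G) (hv : v ∈ tspan k s G)
    (huv : u + v = G a) : u = G a ∨ v = G a := by
  obtain ⟨b, rfl⟩ := hu
  obtain ⟨c, rfl⟩ := hv
  have hsum : (b a + c a) • G a + ∑ x ∈ s.erase a, (b x + c x) • G x = G a := by
    rw [Finset.add_sum_erase s (fun x => (b x + c x) • G x) ha, ← huv,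
      ← Finset.sum_add_distrib]
    simp only [TropModule.add_smul]
  by_cases h1 : b a + c a = 1
  · rcases hk.add_eq_or (b a) (c a) with h | h
    · refine Or.inl (tle_antisymm (huv ▸ tle_add_left _ _) ?_)
      have : tle (b a • G a) (∑ x ∈ s, b x • G x) :=
        tle_sum_of_mem (f := fun x => b x • G x) ha
      rwa [← h, h1, TropModule.one_smul] at this
    · refine Or.inr (tle_antisymm (huv ▸ tle_add_right _ _) ?_)
      have : tle (c a • G a) (∑ x ∈ s, c x • G x) :=
        tle_sum_of_mem (f := fun x => c x • G x) ha
      rwa [← h, h1, TropModule.one_smul] at this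
  · refine absurd ⟨fun x => b x + c x, funext fun l => ?_⟩ (hs a ha)
    have hl : (b a + c a) * G a l + (∑ x ∈ s.erase a, (b x + c x) • G x) l = G a l :=
      congrFun hsum l
    exact hk.eq_of_add_eq hl fun h => h1 (TropSemifield.eq_one_of_mul_eq_self (hGa l) h)

end TSpan

namespace TSub

variable {k M : Type*} [TropSemifield k] [TropSemigroup M] [TropModule k M] (N : TSub k M)

theorem isTSubmodule : IsTSubmodule k N.carrier := ⟨N.zero_mem, N.add_mem, N.smul_mem⟩

theorem tle_iff_val {v w : N.carrier} : tle v w ↔ tle v.1 w.1 := Subtype.ext_iff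

theorem tExtremal_mk {g : M} (hg : g ∈ N.carrier) (hg0 : g ≠ 0)
    (h : ∀ u ∈ N.carrier, ∀ v ∈ N.carrier, u + v = g → u = g ∨ v = g) :
    TExtremal (⟨g, hg⟩ : N.carrier) :=
  ⟨fun h0 => hg0 (congrArg Subtype.val h0), fun u v huv =>
    (h u.1 u.2 v.1 v.2 (congrArg Subtype.val huv)).imp Subtype.ext Subtype.ext⟩

variable {N}

theorem tle_or_tle_of_tle_add (hs : Straight N.carrier) {g : N.carrier} (hg : TExtremal g)
    {x y : M} (hx : x ∈ N.carrier) (hy : y ∈ N.carrier) (h : tle g.1 (x + y)) :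
    tle g.1 x ∨ tle g.1 y :=
  (hs.tle_or_tle_of_tle_add (x := ⟨x, hx⟩) (y := ⟨y, hy⟩) hg (N.tle_iff_val.2 h)).imp
    N.tle_iff_val.1 N.tle_iff_val.1

theorem exists_tle_of_tle_sum (hs : Straight N.carrier) {g : N.carrier} (hg : TExtremal g)
    {α : Type*} {s : Finset α} {f : α → M} (hf : ∀ a ∈ s, f a ∈ N.carrier)
    (h : tle g.1 (∑ a ∈ s, f a)) : ∃ a ∈ s, tle g.1 (f a) := by
  classical
  induction s using Finset.induction_on with
  | empty => exact absurd (Subtype.ext (eq_zero_of_tle_zero h)) hg.1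
  | insert a s ha ih =>
    rw [Finset.sum_insert ha] at h
    rcases tle_or_tle_of_tle_add hs hg (hf a (Finset.mem_insert_self a s))
        (N.isTSubmodule.sum_mem fun b hb => hf b (Finset.mem_insert_of_mem hb)) h with h | h
    · exact ⟨a, Finset.mem_insert_self a s, h⟩
    · obtain ⟨b, hb, h⟩ := ih (fun b hb => hf b (Finset.mem_insert_of_mem hb)) h
      exact ⟨b, Finset.mem_insert_of_mem hb, h⟩

end TSub

namespace RT

theorem rc_ne_zero (x : ℝ) : rc x ≠ 0 := WithBot.coe_ne_bot

theorem rc_add_rc (x y : ℝ) : rc x + rc y = rc (max x y) := (WithBot.coe_max x y).symm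

theorem rc_tle_rc {x y : ℝ} : tle (rc x) (rc y) ↔ x ≤ y := by
  rw [tle, rc_add_rc]
  exact WithBot.coe_injective.eq_iff.trans max_eq_right_iff

theorem totallyOrdered : TotallyOrderedTSF RT := fun a b =>
  (le_total (α := WithBot ℝ) a b).imp max_eq_right max_eq_right

theorem rc_sum {α : Type*} {s : Finset α} (hs : s.Nonempty) (u : α → ℝ) :
    ∑ a ∈ s, rc (u a) = rc (s.sup' hs u) := by
  induction hs using Finset.Nonempty.cons_induction with
  | singleton a => rw [Finset.sum_singleton, Finset.sup'_singleton]
  | cons a s ha hs ih => rw [Finset.sum_cons, Finset.sup'_cons, ih, rc_add_rc]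

end RT

def rcVec {ι : Type*} (x : ι → ℝ) : ι → RT := fun l => rc (x l)

section RealVectors

variable {ι : Type*}

theorem rcVec_apply_ne_zero (x : ι → ℝ) (l : ι) : rcVec x l ≠ 0 := RT.rc_ne_zero _

theorem rcVec_ne_zero [Nonempty ι] (x : ι → ℝ) : rcVec x ≠ 0 := fun h =>
  rcVec_apply_ne_zero x (Classical.arbitrary ι) (congrFun h _)

theorem rc_smul_rcVec (t : ℝ) (x : ι → ℝ) : rc t • rcVec x = rcVec fun l => t + x l :=
  funext fun l => RT.rc_mul t (x l)

theorem rcVec_tle_rcVec {x y : ι → ℝ} : tle (rcVec x) (rcVec y) ↔ x ≤ y :=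
  funext_iff.trans (forall_congr' fun _ => RT.rc_tle_rc)

theorem sum_rcVec {α : Type*} {s : Finset α} (hs : s.Nonempty) (u : α → ι → ℝ) :
    ∑ a ∈ s, rcVec (u a) = rcVec fun l => s.sup' hs (u · l) :=
  funext fun l => by rw [Finset.sum_apply]; exact RT.rc_sum hs _

theorem exists_pos_forall_add_le [Fintype ι] [Nonempty ι] {x y : ι → ℝ}
    (h : ∀ l, x l < y l) : ∃ t > 0, ∀ l, t + x l ≤ y l :=
  ⟨Finset.univ.inf' Finset.univ_nonempty fun l => y l - x l,
    (Finset.lt_inf'_iff _).2 fun l _ => sub_pos.2 (h l),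
    fun l => by linarith [Finset.inf'_le (fun l => y l - x l) (Finset.mem_univ l)]⟩

end RealVectors

theorem exists_forall_sub_le_of_tExtremal {ι : Type*} [Fintype ι] [Nonempty ι]
    {N : TSub RT (ι → RT)} (hs : Straight N.carrier) {R : Finset (ι → ℝ)}
    (hR : ∀ x ∈ R, rcVec x ∈ N.carrier) {y : ι → ℝ} (hy : y ∈ R)
    (hext : TExtremal (⟨rcVec y, hR y hy⟩ : N.carrier)) :
    ∃ j, ∀ x ∈ R, ∀ l, x j - y j ≤ x l - y l := by
  set B : (ι → ℝ) → ℝ := fun x => Finset.univ.inf' Finset.univ_nonempty fun l => x l - y l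
  have hB : ∀ x l, B x ≤ x l - y l := fun x l => Finset.inf'_le _ (Finset.mem_univ l)
  suffices ∃ j, ∀ x ∈ R, x j - B x ≤ y j by
    obtain ⟨j, hj⟩ := this
    exact ⟨j, fun x hx l => by linarith [hj x hx, hB x l]⟩
  by_contra! hlt
  set w : ι → ℝ := fun l => R.sup' ⟨y, hy⟩ fun x => x l - B x
  have hyw : ∀ l, y l < w l := fun l => by
    obtain ⟨x, hx, h⟩ := hlt l
    exact h.trans_le (Finset.le_sup' (fun x => x l - B x) hx)
  obtain ⟨t, ht, htw⟩ := exists_pos_forall_add_le hyw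
  have hw : ∑ x ∈ R, rc (-B x) • rcVec x = rcVec w := by
    simp only [rc_smul_rcVec, sum_rcVec ⟨y, hy⟩, w, neg_add_eq_sub]
  obtain ⟨x, -, hx⟩ := TSub.exists_tle_of_tle_sum hs (hext.smul (RT.rc_ne_zero t))
    (fun x hx => N.smul_mem _ _ (hR x hx))
    (show tle (rc t • rcVec y) _ by rw [hw, rc_smul_rcVec, rcVec_tle_rcVec]; exact htw)
  change tle (rc t • rcVec y) _ at hx
  rw [rc_smul_rcVec, rc_smul_rcVec, rcVec_tle_rcVec] at hx
  have : t + B x ≤ B x := Finset.le_inf' _ _ fun l _ => by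
    linarith [show t + y l ≤ -B x + x l from hx l]
  linarith

theorem card_le_of_tIrredundant {ι : Type*} [Fintype ι] [Nonempty ι] (N : TSub RT (ι → RT))
    (hs : Straight N.carrier) (R : Finset (ι → ℝ)) (hR : tspan RT R rcVec = N.carrier)
    (hirr : TIrredundant RT R rcVec) : R.card ≤ Fintype.card ι := by
  have hmem : ∀ x ∈ R, rcVec x ∈ N.carrier := fun x hx => hR ▸ mem_tspan hx rcVec
  have hext : ∀ y (hy : y ∈ R), TExtremal (⟨rcVec y, hmem y hy⟩ : N.carrier) := fun y hy =>
    N.tExtremal_mk _ (rcVec_ne_zero y) fun u hu v hv =>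
      hirr.eq_or_eq_of_add_eq RT.totallyOrdered hy (rcVec_apply_ne_zero y) (hR ▸ hu) (hR ▸ hv)
  choose! j hj using fun y hy => exists_forall_sub_le_of_tExtremal hs hmem hy (hext y hy)
  have hinj : Set.InjOn j R := by
    intro x hx y hy hxy
    by_contra hne
    have hxy' : rcVec x = rc (x (j x) - y (j x)) • rcVec y := by
      rw [rc_smul_rcVec]
      congr 1
      funext l
      have h₁ := hj x hx y hy l
      have h₂ := hj y hy x hx l
      rw [← hxy] at h₂
      linarith
    refine hirr x hx (hxy' ▸ (isTSubmodule_tspan _ _).smul_mem _ _ ?_)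
    exact mem_tspan (Finset.mem_erase.2 ⟨Ne.symm hne, hy⟩) rcVec
  calc R.card ≤ (Finset.univ : Finset ι).card :=
        Finset.card_le_card_of_injOn j (fun _ _ => Finset.mem_univ _) hinj
    _ = Fintype.card ι := Finset.card_univ

section Projective

variable {n : ℕ}

def projSet (A : Set (Fin (n + 1) → RT)) : Set (TP n) :=
  {q | ∃ v, ∃ h : v ≠ 0, v ∈ A ∧ tphi v h = q}

theorem tphi_mem_of_mem_Mof {Q : Set (TP n)} {v : Fin (n + 1) → RT} (hv : v ∈ Mof Q)
    (h : v ≠ 0) : tphi v h ∈ Q := by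
  rcases hv with ⟨_, hq⟩ | hv0
  · exact hq
  · exact absurd hv0 h

theorem Mof_projSet {A : Set (Fin (n + 1) → RT)} (hA : IsTSubmodule RT A) :
    Mof (projSet A) = A := by
  ext v
  constructor
  · rintro (⟨_, u, _, hu, huv⟩ | hv)
    · obtain ⟨c, rfl⟩ := Quotient.exact huv
      exact hA.smul_mem _ _ hu
    · exact (Set.mem_singleton_iff.1 hv).symm ▸ hA.zero_mem
  · intro hv
    by_cases h : v = 0
    · exact Or.inr h
    · exact Or.inl ⟨h, v, h, hv, rfl⟩

theorem tchull_image_eq_projSet {α : Type*} (s : Finset α) (G : α → Fin (n + 1) → RT)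
    (hG : ∀ a, G a ≠ 0) :
    tchull ((fun a => tphi (G a) (hG a)) '' (s : Set α)) = projSet (tspan RT s G) := by
  have hconv : TropConvexP (projSet (tspan RT s G)) := by
    rw [TropConvexP, Mof_projSet (isTSubmodule_tspan s G)]
    exact isTSubmodule_tspan s G
  refine subset_antisymm (Set.sInter_subset_of_mem ⟨hconv, ?_⟩) (Set.subset_sInter ?_)
  · rintro _ ⟨a, ha, rfl⟩
    exact ⟨G a, hG a, mem_tspan ha G, rfl⟩
  · rintro Q ⟨hQ, hsQ⟩ _ ⟨v, hv, hvs, rfl⟩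
    have : tspan RT s G ⊆ Mof Q :=
      (tspan_subset_iff hQ).2 fun a ha => Or.inl ⟨hG a, hsQ ⟨a, ha, rfl⟩⟩
    exact tphi_mem_of_mem_Mof (this hvs) hv

theorem embR_eq_tphi_rcVec (v : Fin n → ℝ) :
    embR v = tphi (rcVec (Fin.cons 0 v)) (rcVec_ne_zero _) := by
  have : (Fin.cons (rc 0) fun i => rc (v i) : Fin (n + 1) → RT) = rcVec (Fin.cons 0 v) := by
    funext l
    refine Fin.cases ?_ (fun i => ?_) l <;> simp [rcVec]
  unfold embR
  congr 1

theorem exists_finset_image_tphi_rcVec (S : Finset (TP n)) (hS : ∀ x ∈ S, ∃ v, x = embR v) :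
    ∃ R : Finset (Fin (n + 1) → ℝ),
      (↑S : Set (TP n)) = (fun x => tphi (rcVec x) (rcVec_ne_zero x)) '' ↑R := by
  classical
  have : (S : Set (TP n)) ⊆ (fun x => tphi (rcVec x) (rcVec_ne_zero x)) '' Set.univ := by
    intro x hx
    obtain ⟨v, rfl⟩ := hS x hx
    exact ⟨_, trivial, (embR_eq_tphi_rcVec v).symm⟩
  obtain ⟨R, -, hR⟩ := Finset.subset_set_image_iff.1 this
  exact ⟨R, by rw [← hR, Finset.coe_image]⟩

end Projective

theorem stmt6_general {n : ℕ} (P : Set (TP n)) (hP : IsTropPolytope P)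
    (N : TSub RT (Fin (n + 1) → RT)) (hN : N.carrier = Mof P)
    (hstraight : Straight ↥N.carrier) :
    ∃ S : Finset (TP n), S.card ≤ n + 1 ∧ P = tchull ↑S := by
  classical
  obtain ⟨S, hS, rfl⟩ := hP
  obtain ⟨R, hSR⟩ := exists_finset_image_tphi_rcVec S hS
  have hspan : tspan RT R rcVec = N.carrier := by
    rw [hN, hSR, tchull_image_eq_projSet, Mof_projSet (isTSubmodule_tspan _ _)]
  obtain ⟨R', -, hirr, hR'⟩ := exists_subset_tIrredundant RT R rcVec
  refine ⟨R'.image fun x => tphi (rcVec x) (rcVec_ne_zero x), ?_, ?_⟩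
  · calc _ ≤ R'.card := Finset.card_image_le
      _ ≤ Fintype.card (Fin (n + 1)) :=
        card_le_of_tIrredundant N hstraight R' (hR'.trans hspan) hirr
      _ = n + 1 := Fintype.card_fin _
  · rw [hSR, Finset.coe_image, tchull_image_eq_projSet, tchull_image_eq_projSet, hR']

theorem stmt6 {n : ℕ} (P : Set (TP n)) (hP : IsTropPolytope P)
    (N : TSub RT (Fin (n + 1) → RT)) (hN : N.carrier = Mof P)
    (hstraight : Straight ↥N.carrier)
    (hrefl : Function.Bijective (iotaFun RT ↥N.carrier)) :
    ∃ S : Finset (TP n), S.card ≤ n + 1 ∧ P = tchull ↑S :=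
  stmt6_general P hP N hN hstraight
end

section
/- Let k be a totally ordered tropical semifield and let M be a pre-reflexive k-module. Then M has a basis if and only if M is extremally generated. More precisely, a system of generators E = {e_λ : λ ∈ Λ} is a basis if and only if each e_λ is extremal and k⊙e_λ ≠ k⊙e_μ for λ ≠ μ. -/
/-!
A non-extremal generator `e = v ⊕ w` can be dropped from a generating set: writing
`v = c₁ ⊙ e ⊕ u₁`, `w = c₂ ⊙ e ⊕ u₂` with `u₁, u₂` in the span of the other generators,
totality of `k` makes `c = c₁ ⊕ c₂` equal to `c₁` or `c₂`, so `c` cannot be the unity (then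
`v = e` or `w = e`); and `e = c ⊙ e ⊕ (u₁ ⊕ u₂)` with `c` not the unity forces
`⟨e, ξ⟩ = ⟨u₁ ⊕ u₂, ξ⟩` for every `ξ ∈ M∨`, so `e = u₁ ⊕ u₂` by pre-reflexivity. Conversely an
extremal element of a span lies on the ray of one of the spanning elements, so an extremally
generated set with one element per ray is minimal.
-/

theorem TotallyOrderedTSF.eq_of_eq_mul_add {k : Type*} [TropSemifield k]
    (hto : TotallyOrderedTSF k) {c x y : k} (hc : c ≠ 1) (h : x = c * x + y) : x = y := by
  rcases hto (c * x) y with hle | hle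
  · exact h.trans hle
  · have hx : x = c * x := h.trans ((add_comm _ _).trans hle)
    by_cases hx0 : x = 0
    · simpa [hx0] using h
    · obtain ⟨t, ht⟩ := TropSemifield.exists_inv x hx0
      refine absurd ?_ hc
      calc c = c * x * t := by rw [mul_assoc, ht, mul_one]
        _ = 1 := by rw [← hx, ht]

/-- The axioms of a `k`-module are those of a `Module` over the semiring `k`; as a local
instance this makes `Submodule.span` available. -/
abbrev TropModule.toModule (k M : Type*) [TropSemifield k] [TropSemigroup M] [TropModule k M] :
    Module k M where
  one_smul := TropModule.one_smul
  mul_smul := TropModule.mul_smul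
  smul_zero := TropModule.smul_zero
  smul_add := TropModule.smul_add
  add_smul := TropModule.add_smul
  zero_smul := TropModule.zero_smul

section

variable {k M : Type*} [TropSemifield k] [TropSemigroup M] [TropModule k M]

attribute [local instance] TropModule.toModule

open Submodule

theorem tgenerates_iff_span_eq_top {S : Set M} : TGenerates k S ↔ span k S = ⊤ := by
  simp only [eq_top_iff', mem_span_set']
  refine forall_congr' fun v => ⟨?_, ?_⟩
  · rintro ⟨n, a, x, hx, rfl⟩
    exact ⟨n, a, fun i => ⟨x i, hx i⟩, rfl⟩
  · rintro ⟨n, a, x, rfl⟩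
    exact ⟨n, a, fun i => x i, fun i => (x i).2, rfl⟩

theorem TropSemigroup.eq_of_eq_add_of_add_eq {v w e u : M} (hv : v = e + u) (he : v + w = e) :
    v = e := by
  have hev : e + v = v := by rw [hv, ← add_assoc, TropSemigroup.add_idem]
  have hve : v + e = e := by rw [← he, ← add_assoc, TropSemigroup.add_idem]
  rw [← hev, add_comm, hve]

theorem eq_of_eq_smul_add (hto : TotallyOrderedTSF k) (hpre : Function.Injective (iotaFun k M))
    {c : k} (hc : c ≠ 1) {e u : M} (h : e = c • e + u) : e = u := by
  refine hpre (TropHom.ext' fun ξ => hto.eq_of_eq_mul_add hc ?_)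
  change ξ.toFun e = c * ξ.toFun e + ξ.toFun u
  conv_lhs => rw [h, ξ.map_add', ξ.map_smul']
  rfl

theorem mem_span_sdiff_singleton_of_add_eq (hto : TotallyOrderedTSF k)
    (hpre : Function.Injective (iotaFun k M)) {S : Set M} (hS : span k S = ⊤) {e v w : M}
    (hvw : v + w = e) (hv : v ≠ e) (hw : w ≠ e) : e ∈ span k (S \ {e}) := by
  have hdecomp : ∀ x : M, ∃ c : k, ∃ u ∈ span k (S \ {e}), x = c • e + u := fun x =>
    mem_span_insert.mp (span_mono (Set.subset_insert_sdiff_singleton e S) (hS ▸ mem_top))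
  obtain ⟨c₁, u₁, hu₁, hv₁⟩ := hdecomp v
  obtain ⟨c₂, u₂, hu₂, hw₂⟩ := hdecomp w
  have he : e = (c₁ + c₂) • e + (u₁ + u₂) := by
    rw [add_smul, add_add_add_comm, ← hv₁, ← hw₂, hvw]
  by_cases hc : c₁ + c₂ = 1
  · exfalso
    rcases hto c₁ c₂ with h₁₂ | h₂₁
    · refine hw (TropSemigroup.eq_of_eq_add_of_add_eq (u := u₂) ?_ ((add_comm _ _).trans hvw))
      rw [hw₂, ← h₁₂, hc, one_smul]
    · refine hv (TropSemigroup.eq_of_eq_add_of_add_eq (u := u₁) ?_ hvw)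
      rw [hv₁, ← h₂₁, add_comm c₂ c₁, hc, one_smul]
  · obtain rfl : e = u₁ + u₂ := eq_of_eq_smul_add hto hpre hc he
    exact add_mem hu₁ hu₂

theorem TExtremal.exists_eq_of_eq_sum {ι : Type*} {e : M} (he : TExtremal e) (s : Finset ι)
    (f : ι → M) (hs : e = ∑ i ∈ s, f i) : ∃ i ∈ s, e = f i := by
  classical
  induction s using Finset.induction_on with
  | empty => exact absurd hs he.1
  | insert j s hj ih =>
    rw [Finset.sum_insert hj] at hs
    rcases he.2 _ _ hs.symm with h | h
    · exact ⟨j, Finset.mem_insert_self j s, h.symm⟩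
    · obtain ⟨i, hi, hei⟩ := ih h.symm
      exact ⟨i, Finset.mem_insert_of_mem hi, hei⟩

theorem mem_tray_self (e : M) : e ∈ tray k e := ⟨1, TropModule.one_smul e⟩

theorem tray_eq_of_eq_smul {e x : M} {a : k} (ha : a ≠ 0) (h : e = a • x) :
    tray k e = tray k x := by
  obtain ⟨t, ht⟩ := TropSemifield.exists_inv a ha
  have hx : x = t • e := by rw [h, ← mul_smul, mul_comm, ht, one_smul]
  ext y
  constructor
  · rintro ⟨b, rfl⟩
    exact ⟨b * a, by simp only [mul_smul, ← h]⟩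
  · rintro ⟨b, rfl⟩
    exact ⟨b * t, by simp only [mul_smul, ← hx]⟩

theorem TExtremal.exists_tray_eq_of_mem_span {e : M} (he : TExtremal e) {T : Set M}
    (heT : e ∈ span k T) : ∃ x ∈ T, tray k e = tray k x := by
  obtain ⟨n, a, x, hsum⟩ := mem_span_set'.mp heT
  obtain ⟨i, -, hi⟩ := he.exists_eq_of_eq_sum Finset.univ _ hsum.symm
  have ha : a i ≠ 0 := fun h => he.1 (by rw [hi, h, zero_smul])
  exact ⟨x i, (x i).2, tray_eq_of_eq_smul ha hi⟩

theorem TBasis.notMem_span_sdiff_singleton {S : Set M} (hb : TBasis k S) {e : M} (he : e ∈ S) :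
    e ∉ span k (S \ {e}) := by
  intro h
  refine hb.2 (S \ {e}) (Set.sdiff_singleton_ssubset.mpr he) (tgenerates_iff_span_eq_top.mpr ?_)
  rw [← span_insert_eq_span h, Set.insert_sdiff_singleton, Set.insert_eq_of_mem he,
    ← tgenerates_iff_span_eq_top]
  exact hb.1

theorem tbasis_iff_extremal_and_tray_ne (hto : TotallyOrderedTSF k)
    (hpre : Function.Injective (iotaFun k M)) {S : Set M} (hS : TGenerates k S) :
    TBasis k S ↔
      (∀ e ∈ S, TExtremal e) ∧ ∀ e ∈ S, ∀ e' ∈ S, e ≠ e' → tray k e ≠ tray k e' := by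
  constructor
  · intro hb
    refine ⟨fun e he => ?_, fun e he e' he' hne hray => ?_⟩
    · by_contra hext
      refine hb.notMem_span_sdiff_singleton he ?_
      by_cases h0 : e = 0
      · subst h0
        exact zero_mem _
      · obtain ⟨v, w, hvw, hv, hw⟩ : ∃ v w, v + w = e ∧ v ≠ e ∧ w ≠ e := by
          simpa [TExtremal, h0, not_or] using hext
        exact mem_span_sdiff_singleton_of_add_eq hto hpre (tgenerates_iff_span_eq_top.mp hS)
          hvw hv hw
    · obtain ⟨a, rfl⟩ : e' ∈ tray k e := hray ▸ mem_tray_self e'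
      exact hb.notMem_span_sdiff_singleton he' (smul_mem _ a (subset_span ⟨he, hne⟩))
  · rintro ⟨hext, hray⟩
    refine ⟨hS, fun T hTS hT => ?_⟩
    obtain ⟨e, heS, heT⟩ := Set.exists_of_ssubset hTS
    obtain ⟨x, hxT, hex⟩ := (hext e heS).exists_tray_eq_of_mem_span
      (T := T) (tgenerates_iff_span_eq_top.mp hT ▸ mem_top)
    exact hray e heS x (hTS.1 hxT) (fun h => heT (h ▸ hxT)) hex

theorem exists_tbasis_of_extremal_generators (hto : TotallyOrderedTSF k)
    (hpre : Function.Injective (iotaFun k M)) {S : Set M} (hS : TGenerates k S)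
    (hext : ∀ e ∈ S, TExtremal e) : ∃ T : Set M, TBasis k T := by
  obtain ⟨T, hTS, hbij⟩ := Set.exists_subset_bijOn S (tray k)
  have hT : TGenerates k T := by
    rw [tgenerates_iff_span_eq_top, eq_top_iff, ← tgenerates_iff_span_eq_top.mp hS, span_le]
    intro s hs
    obtain ⟨t, ht, hst⟩ := hbij.surjOn ⟨s, hs, rfl⟩
    obtain ⟨a, rfl⟩ : s ∈ tray k t := hst ▸ mem_tray_self s
    exact smul_mem _ a (subset_span ht)
  exact ⟨T, (tbasis_iff_extremal_and_tray_ne hto hpre hT).mpr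
    ⟨fun e he => hext e (hTS he), fun e he e' he' hne => mt (hbij.injOn he he') hne⟩⟩

end

theorem stmt7 {k M : Type*} [TropSemifield k] [TropSemigroup M] [TropModule k M]
    (hto : TotallyOrderedTSF k) (hpre : Function.Injective (iotaFun k M)) :
    ((∃ S : Set M, TBasis k S) ↔ ∃ S : Set M, TGenerates k S ∧ ∀ e ∈ S, TExtremal e) ∧
    ∀ S : Set M, TGenerates k S →
      (TBasis k S ↔ ((∀ e ∈ S, TExtremal e) ∧
        ∀ e ∈ S, ∀ e' ∈ S, e ≠ e' → tray k e ≠ tray k e')) := by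
  refine ⟨⟨fun ⟨S, hb⟩ => ?_, fun ⟨S, hS, hext⟩ => ?_⟩, fun S hS => ?_⟩
  · exact ⟨S, hb.1, ((tbasis_iff_extremal_and_tray_ne hto hpre hb.1).mp hb).1⟩
  · exact exists_tbasis_of_extremal_generators hto hpre hS hext
  · exact tbasis_iff_extremal_and_tray_ne hto hpre hS
end

section
/- Let k be a tropical semifield, let α : M → N be a homomorphism of k-modules, and let w ∈ N be an extremal element. Then any minimal element of the preimage α⁻¹(w) (with respect to the canonical partial order on M) is an extremal element of M. -/
section MinimalPreimage

variable {M N : Type*} [TropSemigroup M] [AddZeroClass N]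

theorem tle_of_add_eq {x y e : M} (h : x + y = e) : tle x e := by
  show x + e = e
  rw [← h, ← add_assoc, TropSemigroup.add_idem]

theorem TExtremal.of_minimal_preimage (f : M →+ N) {w : N} (hw : TExtremal w) {e : M}
    (he : f e = w) (hmin : ∀ v, f v = w → tle v e → v = e) : TExtremal e := by
  refine ⟨?_, fun v u hvu => ?_⟩
  · rintro rfl
    exact hw.1 (by rw [← he, map_zero])
  · have hsum : f v + f u = w := by rw [← map_add, hvu, he]
    rcases hw.2 _ _ hsum with hv | hu
    · exact Or.inl (hmin v hv (tle_of_add_eq hvu))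
    · exact Or.inr (hmin u hu (tle_of_add_eq ((add_comm u v).trans hvu)))

end MinimalPreimage

def TropHom.toAddMonoidHom {k M N : Type*} [TropSemifield k] [TropSemigroup M] [TropModule k M]
    [TropSemigroup N] [TropModule k N] (α : TropHom k M N) : M →+ N :=
  ⟨⟨α.toFun, α.map_zero'⟩, α.map_add'⟩

theorem stmt8 {k M N : Type*} [TropSemifield k] [TropSemigroup M] [TropModule k M]
    [TropSemigroup N] [TropModule k N]
    (α : TropHom k M N) (w : N) (hw : TExtremal w)
    (e : M) (he : α.toFun e = w)
    (hmin : ∀ v : M, α.toFun v = w → tle v e → v = e) :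
    TExtremal e :=
  TExtremal.of_minimal_preimage α.toAddMonoidHom hw he hmin
end

section
/- Let k be a totally ordered tropical semifield and let α : M → N be a lattice-preserving injective homomorphism of k-modules such that N is straight. Then M is straight. -/
/-! A lattice-preserving homomorphism sends infima to infima, and an injective homomorphism
reflects the canonical order. So the infimum in `N` of `α v` and `α w` is the image of a lower
bound of `v` and `w`, which is then their infimum in `M`, and the distributive law of `N`
pulls back along `α`. -/

theorem tle_trans {M : Type*} [AddSemigroup M] {a b c : M} (hab : tle a b) (hbc : tle b c) :
    tle a c := by
  unfold tle at *
  rw [← hbc, ← add_assoc, hab]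

theorem tle_antisymm_s10 {M : Type*} [AddCommMagma M] {a b : M} (hab : tle a b) (hba : tle b a) :
    a = b := by
  unfold tle at *
  rw [← hba, add_comm, hab]

namespace TropHom

variable {k M N : Type*} [TropSemifield k] [TropSemigroup M] [TropModule k M]
  [TropSemigroup N] [TropModule k N] (α : TropHom k M N)

theorem map_tle {v w : M} (h : tle v w) : tle (α.toFun v) (α.toFun w) := by
  unfold tle at *
  rw [← α.map_add', h]

theorem tle_of_map_tle (hinj : Function.Injective α.toFun) {v w : M}
    (h : tle (α.toFun v) (α.toFun w)) : tle v w :=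
  hinj (by rw [α.map_add']; exact h)

end TropHom

section

variable {k M N : Type*} [TropSemifield k] [TropSemigroup M] [TropModule k M]
  [TropSemigroup N] [TropModule k N] {α : TropHom k M N}

theorem IsTInf.map (hlat : LatticePreserving α) {v w z : M} (h : IsTInf v w z) :
    IsTInf (α.toFun v) (α.toFun w) (α.toFun z) := by
  refine ⟨α.map_tle h.1, α.map_tle h.2.1, fun x hxv hxw => ?_⟩
  obtain ⟨y, hyv, hyw, hxy⟩ := hlat v w x hxv hxw
  exact tle_trans hxy (α.map_tle (h.2.2 y hyv hyw))

theorem IsTInf.of_map (hinj : Function.Injective α.toFun) {v w z : M}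
    (h : IsTInf (α.toFun v) (α.toFun w) (α.toFun z)) : IsTInf v w z :=
  ⟨α.tle_of_map_tle hinj h.1, α.tle_of_map_tle hinj h.2.1, fun _ hyv hyw =>
    α.tle_of_map_tle hinj (h.2.2 _ (α.map_tle hyv) (α.map_tle hyw))⟩

theorem LatticePreserving.exists_eq_of_isTInf (hlat : LatticePreserving α) {v w : M} {z : N}
    (h : IsTInf (α.toFun v) (α.toFun w) z) :
    ∃ y : M, tle y v ∧ tle y w ∧ α.toFun y = z := by
  obtain ⟨y, hyv, hyw, hzy⟩ := hlat v w z h.1 h.2.1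
  exact ⟨y, hyv, hyw, tle_antisymm_s10 (h.2.2 _ (α.map_tle hyv) (α.map_tle hyw)) hzy⟩

theorem Straight.of_latticePreserving (hlat : LatticePreserving α)
    (hinj : Function.Injective α.toFun) (hN : Straight N) : Straight M := by
  refine ⟨fun v w => ?_, fun v₁ v₂ w z₁ z₂ h₁ h₂ => ?_⟩
  · obtain ⟨z, hz⟩ := hN.1 (α.toFun v) (α.toFun w)
    obtain ⟨y, -, -, rfl⟩ := hlat.exists_eq_of_isTInf hz
    exact ⟨y, hz.of_map hinj⟩
  · have h := hN.2 _ _ _ _ _ (h₁.map hlat) (h₂.map hlat)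
    rw [← α.map_add', ← α.map_add'] at h
    exact h.of_map hinj

end

theorem stmt10_general {k M N : Type*} [TropSemifield k] [TropSemigroup M] [TropModule k M]
    [TropSemigroup N] [TropModule k N]
    (α : TropHom k M N)
    (hlat : LatticePreserving α) (hinj : Function.Injective α.toFun)
    (hN : Straight N) : Straight M :=
  Straight.of_latticePreserving hlat hinj hN

theorem stmt10 {k M N : Type*} [TropSemifield k] [TropSemigroup M] [TropModule k M]
    [TropSemigroup N] [TropModule k N]
    (hto : TotallyOrderedTSF k) (α : TropHom k M N)
    (hlat : LatticePreserving α) (hinj : Function.Injective α.toFun)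
    (hN : Straight N) : Straight M :=
  stmt10_general α hlat hinj hN
end
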